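/- Fix a partition of {1,...,n} into two disjoint subsets N₁ and N₂, and declare a classical crossing of a braid word even if its two strands belong to the same subset and odd otherwise. Then this component-wise parity satisfies the parity axioms: under each defining relation of FB_n, parities of crossings not involved in the relation are unchanged, corresponding crossings on the two sides have equal parities as specified, in a classical second Reidemeister move both crossings have the same parity, and in a classical third Reidemeister move the number of odd crossings among the three is even. -/

import Mathlib

set_option maxHeartbeats 1000000

namespace OneTermBracket

/-- Letters (generators) of free braid words on `n` strands:
`zeta i` is a classical crossing, `tau i` a virtual crossing, `1 ≤ i+1 ≤ n-1`. -/
inductive Letter (n : ℕ) where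
  | zeta (i : Fin (n-1))
  | tau  (i : Fin (n-1))
deriving DecidableEq

namespace Letter

def idx {n : ℕ} : Letter n → Fin (n-1)
  | zeta i => i
  | tau i => i

def isZeta {n : ℕ} : Letter n → Bool
  | zeta _ => true
  | tau _ => false

end Letter

def lo {n : ℕ} (i : Fin (n-1)) : Fin n := ⟨i.1, by have := i.2; omega⟩
def hi {n : ℕ} (i : Fin (n-1)) : Fin n := ⟨i.1 + 1, by have := i.2; omega⟩

/-- The transposition `(i, i+1)` of `{1, …, n}`. -/
def sPerm {n : ℕ} (i : Fin (n-1)) : Equiv.Perm (Fin n) := Equiv.swap (lo i) (hi i)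

/-- Each letter acts on positions as the transposition `(i, i+1)`. -/
def transOf {n : ℕ} (g : Letter n) : Equiv.Perm (Fin n) := sPerm g.idx

/-- The permutation realized by the prefix of length `j` of a braid word,
mapping the top label of a strand to its position at level `j`. -/
def prefPerm {n : ℕ} (w : List (Letter n)) (j : ℕ) : Equiv.Perm (Fin n) :=
  (((w.take j).map transOf).reverse).prod

/-- The permutation `P(β)` of a braid word (top endpoint `k` goes to bottom endpoint `P k`). -/
def permOf {n : ℕ} (w : List (Letter n)) : Equiv.Perm (Fin n) :=
  ((w.map transOf).reverse).prod

/-- The unordered pair of (top labels of the) strands crossing at position `j` of `w`. -/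
def strandsAt {n : ℕ} (w : List (Letter n)) (j : ℕ) : Option (Sym2 (Fin n)) :=
  (w[j]?).map fun g => s((prefPerm w j)⁻¹ (lo g.idx), (prefPerm w j)⁻¹ (hi g.idx))

/-- Component-wise parity determined by a partition `{1,…,n} = N₁ ⊔ N₂` (encoded by
`c : Fin n → Bool`): a classical crossing is odd (`1`) iff its two strands lie in
different parts. Non-classical positions get `0`. -/
def cwParity {n : ℕ} (c : Fin n → Bool) (w : List (Letter n)) (j : ℕ) : ZMod 2 :=
  match w[j]? with
  | some (.zeta i) =>
      if c ((prefPerm w j)⁻¹ (lo i)) = c ((prefPerm w j)⁻¹ (hi i)) then 0 else 1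
  | _ => 0

/-- The defining relations of `F_n` and `FB_n` which do not involve
`ζ_i² = 1` or the classical third Reidemeister move ("strong" moves). -/
inductive RelStrong (n : ℕ) : List (Letter n) → List (Letter n) → Prop
  | tt (i : Fin (n-1)) : RelStrong n [.tau i, .tau i] []
  | virt (i : Fin (n-1)) : RelStrong n [.zeta i, .tau i] [.tau i, .zeta i]
  | far_zz (i j : Fin (n-1)) (h : 2 ≤ Nat.dist i j) :
      RelStrong n [.zeta i, .zeta j] [.zeta j, .zeta i]
  | far_zt (i j : Fin (n-1)) (h : 2 ≤ Nat.dist i j) :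
      RelStrong n [.zeta i, .tau j] [.tau j, .zeta i]
  | far_tt (i j : Fin (n-1)) (h : 2 ≤ Nat.dist i j) :
      RelStrong n [.tau i, .tau j] [.tau j, .tau i]
  | r3v (i j : Fin (n-1)) (h : (j:ℕ) = (i:ℕ) + 1) :
      RelStrong n [.tau i, .tau j, .tau i] [.tau j, .tau i, .tau j]
  | semi (i j : Fin (n-1)) (h : (j:ℕ) = (i:ℕ) + 1) :
      RelStrong n [.tau i, .tau j, .zeta i] [.zeta j, .tau i, .tau j]

/-- The defining relations of `F_n`. -/
inductive RelF (n : ℕ) : List (Letter n) → List (Letter n) → Prop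
  | strong {r1 r2} : RelStrong n r1 r2 → RelF n r1 r2
  | zz (i : Fin (n-1)) : RelF n [.zeta i, .zeta i] []

/-- The defining relations of the free braid group `FB_n`. -/
inductive RelFB (n : ℕ) : List (Letter n) → List (Letter n) → Prop
  | ofF {r1 r2} : RelF n r1 r2 → RelFB n r1 r2
  | r3c (i j : Fin (n-1)) (h : (j:ℕ) = (i:ℕ) + 1) :
      RelFB n [.zeta i, .zeta j, .zeta i] [.zeta j, .zeta i, .zeta j]

/-- One application of a relation from `R` inside a word. -/
def StepOf {n : ℕ} (R : List (Letter n) → List (Letter n) → Prop)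
    (w1 w2 : List (Letter n)) : Prop :=
  ∃ A B r1 r2, R r1 r2 ∧ w1 = A ++ r1 ++ B ∧ w2 = A ++ r2 ++ B

/-- Strong equivalence: all moves of `F_n` except `ζ_i² = 1`. -/
def StrongEq {n : ℕ} (w1 w2 : List (Letter n)) : Prop :=
  Relation.EqvGen (StepOf (RelStrong n)) w1 w2

/-- Equivalence of braid words as elements of `F_n`. -/
def EqF {n : ℕ} (w1 w2 : List (Letter n)) : Prop :=
  Relation.EqvGen (StepOf (RelF n)) w1 w2

/-- Equivalence of braid words as elements of the free braid group `FB_n`. -/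
def EqFB {n : ℕ} (w1 w2 : List (Letter n)) : Prop :=
  Relation.EqvGen (StepOf (RelFB n)) w1 w2

/-- The parity axioms, for a parity `P` defined on the class `C` of braid words.
`P w j` is the parity of the crossing at position `j` of `w` (only classical
positions matter). -/
structure IsParity {n : ℕ} (C : List (Letter n) → Prop)
    (P : List (Letter n) → ℕ → ZMod 2) : Prop where
  /-- Crossings not taking part in a relation keep their parity (part before). -/
  untouched_left : ∀ A B r1 r2, RelFB n r1 r2 →
    C (A ++ r1 ++ B) → C (A ++ r2 ++ B) → ∀ j < A.length,
    P (A ++ r1 ++ B) j = P (A ++ r2 ++ B) j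
  /-- Crossings not taking part in a relation keep their parity (part after). -/
  untouched_right : ∀ A B r1 r2, RelFB n r1 r2 →
    C (A ++ r1 ++ B) → C (A ++ r2 ++ B) → ∀ j < B.length,
    P (A ++ r1 ++ B) (A.length + r1.length + j) = P (A ++ r2 ++ B) (A.length + r2.length + j)
  /-- In commutation-type relations (far commutativity, virtualization), the two
  letters keep their parities. -/
  comm : ∀ A B x y, RelFB n [x, y] [y, x] →
    C (A ++ [x, y] ++ B) → C (A ++ [y, x] ++ B) →
    P (A ++ [x, y] ++ B) A.length = P (A ++ [y, x] ++ B) (A.length + 1) ∧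
    P (A ++ [x, y] ++ B) (A.length + 1) = P (A ++ [y, x] ++ B) A.length
  /-- In a classical second Reidemeister move both crossings have the same parity. -/
  r2c : ∀ A B (i : Fin (n-1)),
    C (A ++ [.zeta i, .zeta i] ++ B) → C (A ++ B) →
    P (A ++ [.zeta i, .zeta i] ++ B) A.length
      = P (A ++ [.zeta i, .zeta i] ++ B) (A.length + 1)
  /-- In a semivirtual move, the classical crossing keeps its parity. -/
  semiv : ∀ A B (i j : Fin (n-1)), (j:ℕ) = (i:ℕ) + 1 →
    C (A ++ [.tau i, .tau j, .zeta i] ++ B) →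
    C (A ++ [.zeta j, .tau i, .tau j] ++ B) →
    P (A ++ [.tau i, .tau j, .zeta i] ++ B) (A.length + 2)
      = P (A ++ [.zeta j, .tau i, .tau j] ++ B) A.length
  /-- In a classical third Reidemeister move the number of odd crossings is even. -/
  r3_even : ∀ A B (i j : Fin (n-1)), (j:ℕ) = (i:ℕ) + 1 →
    C (A ++ [.zeta i, .zeta j, .zeta i] ++ B) →
    C (A ++ [.zeta j, .zeta i, .zeta j] ++ B) →
    P (A ++ [.zeta i, .zeta j, .zeta i] ++ B) A.length
      + P (A ++ [.zeta i, .zeta j, .zeta i] ++ B) (A.length + 1)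
      + P (A ++ [.zeta i, .zeta j, .zeta i] ++ B) (A.length + 2) = 0
  /-- In a classical third Reidemeister move, upper/middle/lower crossings on the
  left correspond to lower/middle/upper crossings on the right with equal parities. -/
  r3_corr : ∀ A B (i j : Fin (n-1)), (j:ℕ) = (i:ℕ) + 1 →
    C (A ++ [.zeta i, .zeta j, .zeta i] ++ B) →
    C (A ++ [.zeta j, .zeta i, .zeta j] ++ B) →
    P (A ++ [.zeta i, .zeta j, .zeta i] ++ B) A.length
      = P (A ++ [.zeta j, .zeta i, .zeta j] ++ B) (A.length + 2) ∧
    P (A ++ [.zeta i, .zeta j, .zeta i] ++ B) (A.length + 1)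
      = P (A ++ [.zeta j, .zeta i, .zeta j] ++ B) (A.length + 1) ∧
    P (A ++ [.zeta i, .zeta j, .zeta i] ++ B) (A.length + 2)
      = P (A ++ [.zeta j, .zeta i, .zeta j] ++ B) A.length

/-- Delete from `w` all classical letters whose parity (given by `par`) is even. -/
def deleteEven {n : ℕ} (w : List (Letter n)) (par : ℕ → ZMod 2) : List (Letter n) :=
  (List.range w.length).filterMap fun j =>
    (w[j]?).bind fun g =>
      match g with
      | .zeta i => if par j = 0 then none else some (.zeta i)
      | .tau i => some (.tau i)

/-- The one-term parity bracket: delete all even classical crossings. -/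
def bracket {n : ℕ} (P : List (Letter n) → ℕ → ZMod 2) (w : List (Letter n)) :
    List (Letter n) :=
  deleteEven w (P w)

/-- Positions of classical crossings of a word. -/
def ZetaPos {n : ℕ} (w : List (Letter n)) : Set ℕ :=
  {j | ∃ i, w[j]? = some (Letter.zeta i)}

/-- The classical crossings at positions `j1 < j2` form a bigon: they lie on the same
pair of strands, and no classical crossing between them lies on either of those strands. -/
def IsBigon {n : ℕ} (w : List (Letter n)) (j1 j2 : ℕ) : Prop :=
  j1 < j2 ∧ j1 ∈ ZetaPos w ∧ j2 ∈ ZetaPos w ∧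
  strandsAt w j1 = strandsAt w j2 ∧
  ∀ k, j1 < k → k < j2 → k ∈ ZetaPos w →
    ∀ e e', strandsAt w j1 = some e → strandsAt w k = some e' → ∀ a ∈ e, a ∉ e'

/-- Delete the letters at two given positions. -/
def delete2 {n : ℕ} (w : List (Letter n)) (j1 j2 : ℕ) : List (Letter n) :=
  (w.eraseIdx (max j1 j2)).eraseIdx (min j1 j2)

/-- One bigon reduction. -/
def BigonStep {n : ℕ} (w w' : List (Letter n)) : Prop :=
  ∃ j1 j2, IsBigon w j1 j2 ∧ w' = delete2 w j1 j2

/-- A word is irreducible if it admits no bigon reduction. -/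
def Irreducible {n : ℕ} (w : List (Letter n)) : Prop := ¬ ∃ j1 j2, IsBigon w j1 j2

/-- Number of classical letters of a word. -/
def countZeta {n : ℕ} (w : List (Letter n)) : ℕ := (w.filter Letter.isZeta).length

/-- `φ` is an isomorphism of the decorated graphs `Γ(w1) ≅ Γ(w2)`, encoded
combinatorially: a bijection of classical crossings preserving the pair of strands
through each crossing, the order of crossings along each strand, and the endpoint
structure (the permutation). -/
structure IsGammaIso {n : ℕ} (w1 w2 : List (Letter n)) (φ : ℕ → ℕ) : Prop where
  maps : ∀ j ∈ ZetaPos w1, φ j ∈ ZetaPos w2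
  inj : ∀ j ∈ ZetaPos w1, ∀ j' ∈ ZetaPos w1, φ j = φ j' → j = j'
  surj : ∀ k ∈ ZetaPos w2, ∃ j ∈ ZetaPos w1, φ j = k
  strands : ∀ j ∈ ZetaPos w1, strandsAt w2 (φ j) = strandsAt w1 j
  order : ∀ j ∈ ZetaPos w1, ∀ j' ∈ ZetaPos w1, j < j' →
    (∃ e e' a, strandsAt w1 j = some e ∧ strandsAt w1 j' = some e' ∧ a ∈ e ∧ a ∈ e') →
    φ j < φ j'
  perm : permOf w1 = permOf w2

/-! ### The groups `F_n` and `FB_n` as presented groups -/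

/-- Generators: `Sum.inl i` is the classical generator `ζ_i`,
`Sum.inr i` is the virtual generator `τ_i`. -/
abbrev GGen (n : ℕ) := Fin (n-1) ⊕ Fin (n-1)

def zg {n : ℕ} (i : Fin (n-1)) : FreeGroup (GGen n) := FreeGroup.of (Sum.inl i)
def tg {n : ℕ} (i : Fin (n-1)) : FreeGroup (GGen n) := FreeGroup.of (Sum.inr i)

/-- The relators of `F_n`. -/
def FRels (n : ℕ) : Set (FreeGroup (GGen n)) :=
  (⋃ i, {zg i * zg i}) ∪ (⋃ i, {tg i * tg i}) ∪
  (⋃ i, {zg i * tg i * (tg i * zg i)⁻¹}) ∪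
  (⋃ (i : Fin (n-1)) (j : Fin (n-1)) (_ : 2 ≤ Nat.dist i j),
    {zg i * zg j * (zg j * zg i)⁻¹, zg i * tg j * (tg j * zg i)⁻¹,
     tg i * tg j * (tg j * tg i)⁻¹}) ∪
  (⋃ (i : Fin (n-1)) (j : Fin (n-1)) (_ : (j:ℕ) = (i:ℕ) + 1),
    {tg i * tg j * tg i * (tg j * tg i * tg j)⁻¹,
     tg i * tg j * zg i * (zg j * tg i * tg j)⁻¹})

/-- The relators of `FB_n`: those of `F_n` together with the classical third
Reidemeister relation. -/
def FBRels (n : ℕ) : Set (FreeGroup (GGen n)) :=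
  FRels n ∪
  (⋃ (i : Fin (n-1)) (j : Fin (n-1)) (_ : (j:ℕ) = (i:ℕ) + 1),
    {zg i * zg j * zg i * (zg j * zg i * zg j)⁻¹})

/-- The group `F_n`. -/
abbrev FGrp (n : ℕ) := PresentedGroup (FRels n)

/-- The free braid group `FB_n`. -/
abbrev FBGrp (n : ℕ) := PresentedGroup (FBRels n)

def zF {n : ℕ} (i : Fin (n-1)) : FGrp n := PresentedGroup.of (Sum.inl i)
def tF {n : ℕ} (i : Fin (n-1)) : FGrp n := PresentedGroup.of (Sum.inr i)

/-- Evaluation of a braid word in `F_n`. -/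
def evalF {n : ℕ} (w : List (Letter n)) : FGrp n :=
  (w.map fun g => match g with
    | Letter.zeta i => zF i
    | Letter.tau i => tF i).prod

/-- For each unordered pair of strands, the mod-2 number of classical letters of `w`
at which these two strands cross (strand labels traced from the top). -/
def crossPar {n : ℕ} : List (Letter n) → Sym2 (Fin n) → ZMod 2
  | [], _ => 0
  | g :: rest, e =>
    (match g with
     | Letter.zeta i => if e = s(lo i, hi i) then (1 : ZMod 2) else 0
     | Letter.tau _ => 0) + crossPar rest (e.map (transOf g))

/-! ### Chord diagrams and the Gaussian parity -/

/-- The setoid on strands given by `SameCycle`; its classes are the orbits of `σ`,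
i.e. the components of the closure. -/
def sameCycleSetoid {n : ℕ} (σ : Equiv.Perm (Fin n)) : Setoid (Fin n) :=
  ⟨σ.SameCycle, ⟨Equiv.Perm.SameCycle.refl σ, Equiv.Perm.SameCycle.symm,
    Equiv.Perm.SameCycle.trans⟩⟩

/-- The rank of a strand in the single cycle of `σ` starting from strand `0`. -/
noncomputable def rankIn {n : ℕ} [NeZero n] (σ : Equiv.Perm (Fin n)) (a : Fin n) : ℕ :=
  ((Function.invFun (fun k : Fin n => (σ ^ (k : ℕ)) 0) a : Fin n) : ℕ)

/-- Coordinates on the core circle of the two endpoints of the chord of the classical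
crossing at position `j` (the circle traverses the strands in the cyclic order of `σ`). -/
noncomputable def chordEnds {n : ℕ} [NeZero n] (w : List (Letter n))
    (σ : Equiv.Perm (Fin n)) (j : ℕ) : ℕ × ℕ :=
  match w[j]? with
  | some (Letter.zeta i) =>
      (rankIn σ ((prefPerm w j)⁻¹ (lo i)) * w.length + j,
       rankIn σ ((prefPerm w j)⁻¹ (hi i)) * w.length + j)
  | _ => (0, 0)

/-- Two chords are linked iff the endpoints of one separate the endpoints of the
other on the core circle. -/
def LinkedChords {n : ℕ} [NeZero n] (w : List (Letter n)) (σ : Equiv.Perm (Fin n))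
    (j k : ℕ) : Prop :=
  Xor' (min (chordEnds w σ j).1 (chordEnds w σ j).2 < (chordEnds w σ k).1 ∧
        (chordEnds w σ k).1 < max (chordEnds w σ j).1 (chordEnds w σ j).2)
       (min (chordEnds w σ j).1 (chordEnds w σ j).2 < (chordEnds w σ k).2 ∧
        (chordEnds w σ k).2 < max (chordEnds w σ j).1 (chordEnds w σ j).2)

/-- The Gaussian parity of the classical crossing at position `j`: the mod-2 number
of chords linked with its chord. Even (`0`) iff linked with evenly many chords. -/
noncomputable def gaussParity {n : ℕ} [NeZero n] (w : List (Letter n))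
    (σ : Equiv.Perm (Fin n)) (j : ℕ) : ZMod 2 :=
  (Nat.card {k : ℕ // k < w.length ∧ k ∈ ZetaPos w ∧ k ≠ j ∧ LinkedChords w σ j k} : ZMod 2)

/-!
Recolouring the strands by the permutation of a prefix `A` turns the parity of the crossing at
position `|A| + k` of `A ++ w` into the parity of the crossing at position `k` of `w`, and every
defining relation of `FB_n` preserves the permutation of a word. So only the relation words
themselves have to be inspected: there every crossing is a pair among at most three strands, and
in a classical third Reidemeister move the three crossings are the three pairs of three strands,
of which an even number are bichromatic.
-/

variable {n : ℕ}

section Transpositions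

variable {i j : Fin (n-1)}

lemma lo_ne_hi (i : Fin (n-1)) : lo (n := n) i ≠ hi i := by
  simp [lo, hi, Fin.ext_iff]

@[simp] lemma sPerm_apply_lo (i : Fin (n-1)) : sPerm (n := n) i (lo i) = hi i :=
  Equiv.swap_apply_left _ _

@[simp] lemma sPerm_apply_hi (i : Fin (n-1)) : sPerm (n := n) i (hi i) = lo i :=
  Equiv.swap_apply_right _ _

@[simp] lemma transOf_zeta (i : Fin (n-1)) : transOf (.zeta i) = sPerm (n := n) i := rfl

@[simp] lemma transOf_tau (i : Fin (n-1)) : transOf (.tau i) = sPerm (n := n) i := rfl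

lemma transOf_inv (g : Letter n) : (transOf g)⁻¹ = transOf g :=
  Equiv.swap_inv _ _

lemma sPerm_apply_of_ne {x : Fin n} (h₁ : (x : ℕ) ≠ i) (h₂ : (x : ℕ) ≠ i + 1) :
    sPerm i x = x :=
  Equiv.swap_apply_of_ne_of_ne (by simpa [lo, Fin.ext_iff]) (by simpa [hi, Fin.ext_iff])

section Far

variable (h : 2 ≤ Nat.dist i j)
include h

lemma sPerm_apply_lo_of_far : sPerm j (lo i) = lo (n := n) i := by
  simp only [Nat.dist] at h
  exact sPerm_apply_of_ne (by simp [lo]; omega) (by simp [lo]; omega)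

lemma sPerm_apply_hi_of_far : sPerm j (hi i) = hi (n := n) i := by
  simp only [Nat.dist] at h
  exact sPerm_apply_of_ne (by simp [hi]; omega) (by simp [hi]; omega)

lemma sPerm_mul_comm_of_far : sPerm i * sPerm j = sPerm (n := n) j * sPerm i := by
  simp only [Nat.dist] at h
  refine (Equiv.Perm.disjoint_swap_swap ?_).commute
  simp [lo, hi, Fin.ext_iff]
  omega

end Far

section Succ

variable (h : (j : ℕ) = i + 1)
include h

lemma lo_succ_eq_hi : lo (n := n) j = hi i := by
  simp [lo, hi, h]

lemma sPerm_succ_apply_lo : sPerm j (lo i) = lo (n := n) i :=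
  sPerm_apply_of_ne (by simp [lo]; omega) (by simp [lo]; omega)

lemma sPerm_succ_apply_hi : sPerm j (hi i) = hi (n := n) j := by
  rw [← lo_succ_eq_hi h, sPerm_apply_lo]

lemma sPerm_apply_hi_succ : sPerm i (hi j) = hi (n := n) j :=
  sPerm_apply_of_ne (by simp [hi]; omega) (by simp [hi]; omega)

lemma sPerm_braid_of_succ :
    sPerm i * sPerm j * sPerm i = sPerm (n := n) j * sPerm i * sPerm j := by
  have hab := lo_ne_hi (n := n) i
  have hae : lo (n := n) i ≠ hi j := by simp [lo, hi, Fin.ext_iff]; omega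
  have hbe : hi (n := n) i ≠ hi j := by simp [hi, Fin.ext_iff]; omega
  simp only [sPerm, lo_succ_eq_hi h]
  calc Equiv.swap (lo i) (hi i) * Equiv.swap (hi i) (hi j) * Equiv.swap (lo i) (hi i)
      = Equiv.swap (hi i) (lo i) * Equiv.swap (hi j) (hi i) * Equiv.swap (hi i) (lo i) := by
        rw [Equiv.swap_comm (lo i), Equiv.swap_comm (hi i) (hi j)]
    _ = Equiv.swap (lo i) (hi j) := Equiv.swap_mul_swap_mul_swap hbe.symm hae.symm
    _ = Equiv.swap (hi i) (hi j) * Equiv.swap (lo i) (hi i) * Equiv.swap (hi i) (hi j) := by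
        rw [Equiv.swap_mul_swap_mul_swap hab hae, Equiv.swap_comm]

end Succ

end Transpositions

lemma permOf_append (u w : List (Letter n)) : permOf (u ++ w) = permOf w * permOf u := by
  simp [permOf]

lemma permOf_cons (g : Letter n) (u : List (Letter n)) :
    permOf (g :: u) = permOf u * transOf g :=
  permOf_append [g] u

lemma permOf_eq_of_relFB {r₁ r₂ : List (Letter n)} (h : RelFB n r₁ r₂) :
    permOf r₁ = permOf r₂ := by
  rcases h with ⟨⟨h⟩ | i⟩ | ⟨i, j, h⟩ <;> try
    rcases h with i | i | ⟨i, j, h⟩ | ⟨i, j, h⟩ | ⟨i, j, h⟩ | ⟨i, j, h⟩ | ⟨i, j, h⟩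
  all_goals
    simp only [permOf, List.map_cons, List.map_nil, List.reverse_cons, List.reverse_nil,
      List.nil_append, List.cons_append, List.prod_cons, List.prod_nil, mul_one, transOf_zeta,
      transOf_tau, ← mul_assoc]
  all_goals first
    | exact Equiv.swap_mul_self _ _
    | exact (sPerm_mul_comm_of_far h).symm
    | exact sPerm_braid_of_succ h

def pairParity {α : Type*} (c : α → Bool) (a b : α) : ZMod 2 := if c a = c b then 0 else 1

lemma pairParity_comm {α : Type*} (c : α → Bool) (a b : α) :
    pairParity c a b = pairParity c b a := by
  simp only [pairParity, eq_comm]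

lemma pairParity_comp {α : Type*} (c : α → Bool) (σ : α → α) (a b : α) :
    pairParity (c ∘ σ) a b = pairParity c (σ a) (σ b) := rfl

lemma pairParity_add_add_eq_zero {α : Type*} (c : α → Bool) (a b e : α) :
    pairParity c a b + pairParity c a e + pairParity c b e = 0 := by
  unfold pairParity
  cases c a <;> cases c b <;> cases c e <;> decide

@[simp] lemma cwParity_zeta_cons_zero (c : Fin n → Bool) (i : Fin (n-1)) (w : List (Letter n)) :
    cwParity c (.zeta i :: w) 0 = pairParity c (lo i) (hi i) := rfl

@[simp] lemma cwParity_tau_cons_zero (c : Fin n → Bool) (i : Fin (n-1)) (w : List (Letter n)) :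
    cwParity c (.tau i :: w) 0 = 0 := rfl

lemma prefPerm_cons_succ (g : Letter n) (w : List (Letter n)) (k : ℕ) :
    prefPerm (g :: w) (k + 1) = prefPerm w k * transOf g := by
  simp [prefPerm]

@[simp] lemma cwParity_cons_succ (c : Fin n → Bool) (g : Letter n) (w : List (Letter n))
    (k : ℕ) :
    cwParity c (g :: w) (k + 1) = cwParity (c ∘ transOf g) w k := by
  unfold cwParity
  rw [prefPerm_cons_succ, List.getElem?_cons_succ]
  rcases w[k]? with _ | _ | _ <;> rfl

lemma cwParity_append_add (c : Fin n → Bool) (u w : List (Letter n)) (k : ℕ) :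
    cwParity c (u ++ w) (u.length + k) = cwParity (c ∘ ⇑(permOf u)⁻¹) w k := by
  induction u generalizing c with
  | nil => simp [permOf]
  | cons g u ih =>
    rw [List.cons_append, List.length_cons, Nat.add_right_comm, cwParity_cons_succ, ih,
      permOf_cons, mul_inv_rev, transOf_inv]
    rfl

lemma cwParity_append_of_lt (c : Fin n → Bool) (u w : List (Letter n)) {j : ℕ}
    (hj : j < u.length) : cwParity c (u ++ w) j = cwParity c u j := by
  induction u generalizing c j with
  | nil => simp at hj
  | cons g u ih =>
    cases j with
    | zero => cases g <;> rfl
    | succ j => simp only [List.cons_append, cwParity_cons_succ, ih _ (by simpa using hj)]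

lemma cwParity_append_length (c : Fin n → Bool) (u w : List (Letter n)) :
    cwParity c (u ++ w) u.length = cwParity (c ∘ ⇑(permOf u)⁻¹) w 0 :=
  cwParity_append_add c u w 0

section LocalMoves

variable (d : Fin n → Bool) (B : List (Letter n))

lemma cwParity_comm_of_relFB {x y : Letter n} (h : RelFB n [x, y] [y, x]) :
    cwParity d (x :: y :: B) 0 = cwParity d (y :: x :: B) 1 ∧
      cwParity d (x :: y :: B) 1 = cwParity d (y :: x :: B) 0 := by
  rcases h with ⟨⟨h⟩⟩
  rcases h with _ | i | ⟨i, j, h⟩ | ⟨i, j, h⟩ | ⟨i, j, h⟩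
  · simp [pairParity_comp, pairParity_comm]
  all_goals
    have h' : 2 ≤ Nat.dist j i := Nat.dist_comm (i : ℕ) j ▸ h
    simp [pairParity_comp, sPerm_apply_lo_of_far h, sPerm_apply_hi_of_far h,
      sPerm_apply_lo_of_far h', sPerm_apply_hi_of_far h']

lemma cwParity_zeta_zeta (i : Fin (n-1)) :
    cwParity d (.zeta i :: .zeta i :: B) 0 = cwParity d (.zeta i :: .zeta i :: B) 1 := by
  simp [pairParity_comp, pairParity_comm]

variable {i j : Fin (n-1)} (h : (j : ℕ) = i + 1)
include h

lemma cwParity_semivirtual :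
    cwParity d (.tau i :: .tau j :: .zeta i :: B) 2 =
      cwParity d (.zeta j :: .tau i :: .tau j :: B) 0 := by
  simp [pairParity_comp, lo_succ_eq_hi h, sPerm_succ_apply_lo h, sPerm_succ_apply_hi h,
    sPerm_apply_hi_succ h]

lemma cwParity_r3_left :
    cwParity d (.zeta i :: .zeta j :: .zeta i :: B) 0 = pairParity d (lo i) (hi i) ∧
      cwParity d (.zeta i :: .zeta j :: .zeta i :: B) 1 = pairParity d (lo i) (hi j) ∧
      cwParity d (.zeta i :: .zeta j :: .zeta i :: B) 2 = pairParity d (hi i) (hi j) := by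
  simp [pairParity_comp, lo_succ_eq_hi h, sPerm_succ_apply_lo h, sPerm_succ_apply_hi h,
    sPerm_apply_hi_succ h]

lemma cwParity_r3_right :
    cwParity d (.zeta j :: .zeta i :: .zeta j :: B) 0 = pairParity d (hi i) (hi j) ∧
      cwParity d (.zeta j :: .zeta i :: .zeta j :: B) 1 = pairParity d (lo i) (hi j) ∧
      cwParity d (.zeta j :: .zeta i :: .zeta j :: B) 2 = pairParity d (lo i) (hi i) := by
  simp [pairParity_comp, lo_succ_eq_hi h, sPerm_succ_apply_lo h, sPerm_succ_apply_hi h,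
    sPerm_apply_hi_succ h]

end LocalMoves

/-- the component-wise parity determined by a partition
`{1,…,n} = N₁ ⊔ N₂` (encoded as `c : Fin n → Bool`) satisfies the parity axioms. -/
theorem componentwise_is_parity (n : ℕ) (c : Fin n → Bool) :
    IsParity (fun _ => True) (cwParity c) := by
  constructor
  · intro A B r₁ r₂ _ _ _ j hj
    simp only [List.append_assoc, cwParity_append_of_lt c A _ hj]
  · intro A B r₁ r₂ h _ _ j _
    rw [← List.length_append, ← List.length_append, cwParity_append_add, cwParity_append_add,
      permOf_append, permOf_append, permOf_eq_of_relFB h]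
  all_goals
    intro A B
    simp only [List.append_assoc, cwParity_append_length, cwParity_append_add, List.cons_append,
      List.nil_append]
  · intro x y h _ _
    exact cwParity_comm_of_relFB _ B h
  · intro i _ _
    exact cwParity_zeta_zeta _ B i
  · intro i j h _ _
    exact cwParity_semivirtual _ B h
  · intro i j h _ _
    obtain ⟨h₀, h₁, h₂⟩ := cwParity_r3_left (c ∘ ⇑(permOf A)⁻¹) B h
    rw [h₀, h₁, h₂]
    exact pairParity_add_add_eq_zero ..
  · intro i j h _ _
    obtain ⟨l₀, l₁, l₂⟩ := cwParity_r3_left (c ∘ ⇑(permOf A)⁻¹) B h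
    obtain ⟨r₀, r₁, r₂⟩ := cwParity_r3_right (c ∘ ⇑(permOf A)⁻¹) B h
    rw [l₀, l₁, l₂, r₀, r₁, r₂]
    exact ⟨rfl, rfl, rfl⟩

end OneTermBracket
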